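/- arXiv:1803.00667 — 2 statements merged into one kernel-verified Lean document; each statement's English description precedes it below -/
import Mathlib

section
/- Let b ∈ ℝⁿ \ ℤⁿ, let S = b + ℤⁿ, and let B be a closed convex set with 0 ∈ int(B) whose interior contains no point of S. Then the inequality Σᵢ ψ_B(rᵢ) sᵢ ≥ 1 is valid for all points (s₁,…,s_k) ∈ ℝ^k with sᵢ ≥ 0 satisfying Σᵢ rᵢ sᵢ ∈ b + ℤⁿ, for any vectors r₁,…,r_k ∈ ℝⁿ. That is, the gauge of any S-free convex neighborhood of 0 yields a valid cut for the continuous corner relaxation. -/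
/-!
Sublinearity of the gauge bounds `ψ_B(∑ sᵢ rᵢ)` by `∑ ψ_B(rᵢ) sᵢ`. The point `∑ sᵢ rᵢ` lies in
`b + ℤⁿ`, hence outside `int B`, and for a convex neighbourhood of `0` the interior is exactly
the strict sublevel set `{ψ_B < 1}`; so `1 ≤ ψ_B(∑ sᵢ rᵢ) ≤ ∑ ψ_B(rᵢ) sᵢ`.
-/

open Topology

section Gauge

variable {E : Type*} [AddCommGroup E] [Module ℝ E] {s : Set E}

theorem gauge_sum_smul_le_sum_mul {ι : Type*} (hs : Convex ℝ s) (habs : Absorbent ℝ s)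
    (t : Finset ι) (c : ι → ℝ) (hc : ∀ i ∈ t, 0 ≤ c i) (x : ι → E) :
    gauge s (∑ i ∈ t, c i • x i) ≤ ∑ i ∈ t, gauge s (x i) * c i :=
  calc gauge s (∑ i ∈ t, c i • x i) ≤ ∑ i ∈ t, gauge s (c i • x i) := gauge_sum_le hs habs t _
    _ = ∑ i ∈ t, gauge s (x i) * c i := Finset.sum_congr rfl fun i hi => by
      rw [gauge_smul_of_nonneg (hc i hi), smul_eq_mul, mul_comm]

theorem one_le_gauge_of_notMem_interior [TopologicalSpace E] [IsTopologicalAddGroup E]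
    [ContinuousSMul ℝ E] (hs : Convex ℝ s) (hs₀ : s ∈ 𝓝 0) {x : E} (hx : x ∉ interior s) :
    1 ≤ gauge s x :=
  not_lt.mp fun h => hx ((gauge_lt_one_iff_mem_interior hs hs₀).mp h)

end Gauge

theorem gauge_valid_cut_general {n k : ℕ} (b : Fin n → ℝ)
    (B : Set (Fin n → ℝ)) (hBconv : Convex ℝ B)
    (h0 : (0 : Fin n → ℝ) ∈ interior B)
    (hfree : ∀ z : Fin n → ℤ, (b + fun i => (z i : ℝ)) ∉ interior B)
    (r : Fin k → Fin n → ℝ) (s : Fin k → ℝ) (hs : ∀ i, 0 ≤ s i)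
    (hmem : ∃ z : Fin n → ℤ, ∑ i, s i • r i = b + fun j => (z j : ℝ)) :
    1 ≤ ∑ i, gauge B (r i) * s i := by
  obtain ⟨z, hz⟩ := hmem
  have hB : B ∈ 𝓝 0 := mem_interior_iff_mem_nhds.mp h0
  calc 1 ≤ gauge B (∑ i, s i • r i) :=
        one_le_gauge_of_notMem_interior hBconv hB (hz ▸ hfree z)
    _ ≤ ∑ i, gauge B (r i) * s i :=
        gauge_sum_smul_le_sum_mul hBconv (absorbent_nhds_zero hB) _ s (fun i _ => hs i) r

/-- The gauge of an `S`-free convex neighborhood of `0`, `S = b + ℤⁿ`, gives a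
valid cut for the continuous corner relaxation: if `sᵢ ≥ 0` and
`∑ᵢ sᵢ rᵢ ∈ b + ℤⁿ` then `∑ᵢ ψ_B(rᵢ) sᵢ ≥ 1`. -/
theorem gauge_valid_cut {n k : ℕ} (b : Fin n → ℝ)
    (hb : ¬ ∃ z : Fin n → ℤ, b = fun i => (z i : ℝ))
    (B : Set (Fin n → ℝ)) (hBcl : IsClosed B) (hBconv : Convex ℝ B)
    (h0 : (0 : Fin n → ℝ) ∈ interior B)
    (hfree : ∀ z : Fin n → ℤ, (b + fun i => (z i : ℝ)) ∉ interior B)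
    (r : Fin k → Fin n → ℝ) (s : Fin k → ℝ) (hs : ∀ i, 0 ≤ s i)
    (hmem : ∃ z : Fin n → ℤ, ∑ i, s i • r i = b + fun j => (z j : ℝ)) :
    1 ≤ ∑ i, gauge B (r i) * s i :=
  gauge_valid_cut_general b B hBconv h0 hfree r s hs hmem
end

section
/- Minimal lifting lower bound formula: let b ∈ ℝⁿ \ ℤⁿ, B a (b+ℤⁿ)-free closed convex set with 0 ∈ int(B), and define π_min(p) = sup_{N ∈ ℕ, N ≥ 1} (1 − 𝜓̃_B(b − N·p))/N. Then π_min(p) ≤ 𝜓̃_B(p) for every p ∈ ℝⁿ. (Any valid lifting is at least π_min and at most the trivial lifting.) -/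
/-- The trivial lifting `𝜓̃_B(x) = min(1, inf_{z ∈ ℤⁿ} ψ_B(x + z))`. -/
noncomputable def trivLift {n : ℕ} (B : Set (Fin n → ℝ)) (x : Fin n → ℝ) : ℝ :=
  min 1 (⨅ z : Fin n → ℤ, gauge B (x + fun i => (z i : ℝ)))

/-- The minimal lifting lower bound
`π_min(p) = sup_{N ≥ 1} (1 − 𝜓̃_B(b − N p))/N`. -/
noncomputable def piMin {n : ℕ} (B : Set (Fin n → ℝ)) (b : Fin n → ℝ)
    (p : Fin n → ℝ) : ℝ :=
  ⨆ N : ℕ+, (1 - trivLift B (b - (N : ℝ) • p)) / (N : ℝ)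

/-- The minimal lifting lower bound is at most the trivial lifting. -/
theorem piMin_le_trivLift {n : ℕ} (b : Fin n → ℝ)
    (hb : ¬ ∃ z : Fin n → ℤ, b = fun i => (z i : ℝ))
    (B : Set (Fin n → ℝ)) (hBcl : IsClosed B) (hBconv : Convex ℝ B)
    (h0 : (0 : Fin n → ℝ) ∈ interior B)
    (hfree : ∀ z : Fin n → ℤ, (b + fun i => (z i : ℝ)) ∉ interior B)
    (p : Fin n → ℝ) :
    piMin B b p ≤ trivLift B p := by
  have hnhds : B ∈ nhds (0 : Fin n → ℝ) := mem_interior_iff_mem_nhds.mp h0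
  have habs : Absorbent ℝ B := absorbent_nhds_zero hnhds
  -- gauge ≥ 1 on b + ℤⁿ
  have hone : ∀ z : Fin n → ℤ, (1 : ℝ) ≤ gauge B (b + fun i => (z i : ℝ)) := by
    intro z
    by_contra h
    exact hfree z ((gauge_lt_one_iff_mem_interior hBconv hnhds).mp (lt_of_not_ge h))
  have hbdd : ∀ x : Fin n → ℝ,
      BddBelow (Set.range fun z : Fin n → ℤ => gauge B (x + fun i => (z i : ℝ))) := by
    intro x
    exact ⟨0, fun r ⟨w, hw⟩ => hw ▸ gauge_nonneg _⟩
  apply ciSup_le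
  intro N
  have hN : (0 : ℝ) < (N : ℝ) := by exact_mod_cast N.pos
  rw [div_le_iff₀ hN]
  set T := trivLift B p with hT
  set S := trivLift B (b - (N : ℝ) • p) with hS
  have hT0 : 0 ≤ T := le_min zero_le_one (le_ciInf fun z => gauge_nonneg _)
  have hS0 : 0 ≤ S := le_min zero_le_one (le_ciInf fun z => gauge_nonneg _)
  -- suffices 1 ≤ S + N * T
  have key : (1 : ℝ) ≤ S + (N : ℝ) * T := by
    rcases le_or_gt 1 (⨅ z : Fin n → ℤ, gauge B (p + fun i => (z i : ℝ))) with hp | hp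
    · have : T = 1 := min_eq_left hp
      nlinarith [N.one_le, (by exact_mod_cast N.one_le : (1:ℝ) ≤ (N:ℝ))]
    · have hTeq : T = ⨅ z : Fin n → ℤ, gauge B (p + fun i => (z i : ℝ)) :=
        min_eq_right hp.le
      rcases le_or_gt 1 (⨅ z : Fin n → ℤ,
          gauge B ((b - (N : ℝ) • p) + fun i => (z i : ℝ))) with hq | hq
      · have : S = 1 := min_eq_left hq
        nlinarith
      · have hSeq : S = ⨅ z : Fin n → ℤ,
            gauge B ((b - (N : ℝ) • p) + fun i => (z i : ℝ)) := min_eq_right hq.le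
        -- main estimate
        have hmain : ∀ z : Fin n → ℤ, (1 - S) / (N : ℝ)
            ≤ gauge B (p + fun i => (z i : ℝ)) := by
          intro z
          rw [div_le_iff₀ hN]
          have hinf : ∀ w : Fin n → ℤ,
              1 - (N : ℝ) * gauge B (p + fun i => (z i : ℝ))
                ≤ gauge B ((b - (N : ℝ) • p) + fun i => (w i : ℝ)) := by
            intro w
            have hadd := gauge_add_le hBconv habs
              ((b - (N : ℝ) • p) + fun i => (w i : ℝ))
              ((N : ℝ) • (p + fun i => (z i : ℝ)))
            have hsmul : gauge B ((N : ℝ) • (p + fun i => (z i : ℝ)))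
                = (N : ℝ) * gauge B (p + fun i => (z i : ℝ)) :=
              gauge_smul_of_nonneg hN.le _
            have heq : ((b - (N : ℝ) • p) + fun i => (w i : ℝ))
                + (N : ℝ) • (p + fun i => (z i : ℝ))
                = b + fun i => ((w i + (N : ℤ) * z i : ℤ) : ℝ) := by
              funext i
              push_cast
              simp [Pi.smul_apply, smul_eq_mul]
              ring
            have h1 := hone (w + (N : ℤ) • z)
            have : (1 : ℝ) ≤ gauge B (((b - (N : ℝ) • p) + fun i => (w i : ℝ))
                + (N : ℝ) • (p + fun i => (z i : ℝ))) := by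
              rw [heq]
              simpa [Pi.add_apply, Pi.smul_apply, smul_eq_mul] using h1
            rw [hsmul] at hadd
            linarith [this.trans hadd]
          have := le_ciInf hinf
          rw [← hSeq] at this
          linarith
        have := le_ciInf hmain
        rw [← hTeq] at this
        rw [div_le_iff₀ hN] at this
        linarith
  linarith
end
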